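/- For every positive integer n, 2·∑_{k=0}^{n-1} (k+1)(16k+21)·T_k·T_{k+1} ≡ 9·n·T_{n-1}·T_n (mod n²). -/

import Mathlib

open Finset

/-- The integer value of C(2k,k)/(2k-1): equals -1 at k = 0 and 2*Catalan(k-1) for k >= 1. -/
def c (k : ℕ) : ℤ := if k = 0 then -1 else 2 * (catalan (k - 1) : ℤ)

/-- W n = ∑_{k=0}^{⌊n/2⌋} C(n,2k) * C(2k,k)/(2k-1). -/
def W (n : ℕ) : ℤ := ∑ k ∈ Finset.range (n / 2 + 1), (n.choose (2 * k) : ℤ) * c k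

/-- The n-th central trinomial coefficient T n = ∑_{l=0}^{⌊n/2⌋} C(n,2l) * C(2l,l). -/
def T (n : ℕ) : ℤ := ∑ l ∈ Finset.range (n / 2 + 1), (n.choose (2 * l) : ℤ) * ((2 * l).choose l : ℤ)

instance fact_prime_3 : Fact (Nat.Prime 3) := ⟨by norm_num⟩

/-- key cast identity: (n+1) C(n,k) = (k+1) C(n+1,k+1) over ℤ. -/
lemma key_choose (n k : ℕ) :
    ((n : ℤ) + 1) * (n.choose k : ℤ) = ((k : ℤ) + 1) * ((n + 1).choose (k + 1) : ℤ) := by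
  have h := Nat.add_one_mul_choose_eq n k
  have h' : ((Nat.succ n * Nat.choose n k : ℕ) : ℤ)
      = ((Nat.choose (Nat.succ n) (Nat.succ k) * Nat.succ k : ℕ) : ℤ) := congrArg _ h
  push_cast at h'
  linarith [h']

/-- extend the defining sum of T to any larger range. -/
lemma T_ext (n N : ℕ) (hN : n / 2 + 1 ≤ N) :
    T n = ∑ l ∈ Finset.range N, (n.choose (2 * l) : ℤ) * ((2 * l).choose l : ℤ) := by
  rw [T]
  refine Finset.sum_subset (Finset.range_subset_range.2 hN) fun l hl hl' => ?_
  simp only [Finset.mem_range, not_lt] at hl hl'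
  have : n < 2 * l := by omega
  rw [Nat.choose_eq_zero_of_lt this]
  simp

/-- Zeilberger certificate telescoping identity per term. -/
lemma per_term (m l : ℕ) :
    ((m : ℤ) + 2) * ((m + 2).choose (2 * l) : ℤ) * ((2 * l).choose l : ℤ)
      - (2 * (m : ℤ) + 3) * ((m + 1).choose (2 * l) : ℤ) * ((2 * l).choose l : ℤ)
      - 3 * ((m : ℤ) + 1) * (m.choose (2 * l) : ℤ) * ((2 * l).choose l : ℤ)
    = (-2 * ((l : ℤ) + 1) * ((2 * (l + 1)).choose (l + 1) : ℤ)
          * ((m + 1).choose (2 * (l + 1) - 1) : ℤ))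
      - (-2 * (l : ℤ) * ((2 * l).choose l : ℤ) * ((m + 1).choose (2 * l - 1) : ℤ)) := by
  cases l with
  | zero =>
    simp only [Nat.mul_zero, Nat.choose_zero_right, Nat.choose_self, Nat.cast_zero, Nat.cast_one]
    norm_num [Nat.choose_one_right]
    ring
  | succ j =>
    have e3 : 2 * (j + 1) - 1 = 2 * j + 1 := by omega
    have e4 : 2 * (j + 1 + 1) - 1 = 2 * j + 3 := by omega
    rw [e3, e4, show 2 * (j + 1 + 1) = 2 * j + 4 from by ring,
      show 2 * (j + 1) = 2 * j + 2 from by ring]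
    have h1 := key_choose (m + 1) (2 * j + 1)
    have h2 := key_choose m (2 * j + 2)
    have h3 := key_choose (m + 1) (2 * j + 2)
    have p1 : (((m + 2).choose (2 * j + 2) : ℕ) : ℤ)
        = ((m + 1).choose (2 * j + 1) : ℤ) + ((m + 1).choose (2 * j + 2) : ℤ) := by
      exact_mod_cast congrArg (Nat.cast (R := ℤ)) (Nat.choose_succ_succ (m + 1) (2 * j + 1))
    have p2 : (((m + 2).choose (2 * j + 3) : ℕ) : ℤ)
        = ((m + 1).choose (2 * j + 2) : ℤ) + ((m + 1).choose (2 * j + 3) : ℤ) := by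
      exact_mod_cast congrArg (Nat.cast (R := ℤ)) (Nat.choose_succ_succ (m + 1) (2 * j + 2))
    have hc0 := Nat.succ_mul_centralBinom_succ (j + 1)
    rw [Nat.centralBinom_eq_two_mul_choose, Nat.centralBinom_eq_two_mul_choose,
      show 2 * (j + 1 + 1) = 2 * j + 4 from by ring, show 2 * (j + 1) = 2 * j + 2 from by ring,
      show j + 1 + 1 = j + 2 from rfl] at hc0
    have hc : ((j : ℤ) + 2) * ((2 * j + 4).choose (j + 2) : ℤ)
        = 2 * (2 * (j : ℤ) + 3) * ((2 * j + 2).choose (j + 1) : ℤ) := by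
      have := congrArg (Nat.cast (R := ℤ)) hc0
      push_cast at this
      linarith [this]
    simp only [show m + 1 + 1 = m + 2 from rfl, show 2 * j + 1 + 1 = 2 * j + 2 from rfl,
      show 2 * j + 2 + 1 = 2 * j + 3 from rfl] at h1 h2 h3
    push_cast at h1 h2 h3 hc ⊢
    linear_combination
      (((2 * j + 2).choose (j + 1) : ℤ)) * h1
      - 3 * (((2 * j + 2).choose (j + 1) : ℤ)) * h2
      - (((2 * j + 2).choose (j + 1) : ℤ)) * h3
      + 2 * (((m + 1).choose (2 * j + 3) : ℤ)) * hc
      + (((m : ℤ) + 2 * (j : ℤ) + 4) * ((2 * j + 2).choose (j + 1) : ℤ)) * p1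
      - ((2 * (j : ℤ) + 3) * ((2 * j + 2).choose (j + 1) : ℤ)) * p2

/-- Three-term recurrence for central trinomial coefficients. -/
lemma T_rec (m : ℕ) :
    ((m : ℤ) + 2) * T (m + 2) = (2 * (m : ℤ) + 3) * T (m + 1) + 3 * ((m : ℤ) + 1) * T m := by
  have e2 := T_ext (m + 2) (m + 3) (by omega)
  have e1 := T_ext (m + 1) (m + 3) (by omega)
  have e0 := T_ext m (m + 3) (by omega)
  set g : ℕ → ℤ :=
    fun l => -2 * (l : ℤ) * ((2 * l).choose l : ℤ) * ((m + 1).choose (2 * l - 1) : ℤ) with hg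
  have key : ((m : ℤ) + 2) * T (m + 2) - (2 * (m : ℤ) + 3) * T (m + 1)
      - 3 * ((m : ℤ) + 1) * T m = 0 := by
    rw [e2, e1, e0, Finset.mul_sum, Finset.mul_sum, Finset.mul_sum, ← Finset.sum_sub_distrib,
      ← Finset.sum_sub_distrib]
    have hcong : ∀ l ∈ Finset.range (m + 3),
        ((m : ℤ) + 2) * (((m + 2).choose (2 * l) : ℤ) * ((2 * l).choose l : ℤ))
          - (2 * (m : ℤ) + 3) * (((m + 1).choose (2 * l) : ℤ) * ((2 * l).choose l : ℤ))
          - 3 * ((m : ℤ) + 1) * ((m.choose (2 * l) : ℤ) * ((2 * l).choose l : ℤ))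
        = g (l + 1) - g l := by
      intro l _
      have h := per_term m l
      simp only [hg]
      push_cast
      push_cast at h
      linarith [h]
    rw [Finset.sum_congr rfl hcong, Finset.sum_range_sub g]
    have hz : (m + 1).choose (2 * (m + 3) - 1) = 0 := Nat.choose_eq_zero_of_lt (by omega)
    simp [hg, hz]
  linarith [key]

lemma T_zero : T 0 = 1 := by simp [T]

lemma T_one : T 1 = 1 := by simp [T]

/-- The exact closed-form identity. -/
lemma main_id (m : ℕ) :
    8 * (∑ k ∈ Finset.range (m + 1), ((k : ℤ) + 1) * (16 * (k : ℤ) + 21) * T k * T (k + 1))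
      = 36 * ((m : ℤ) + 1) * T m * T (m + 1) + ((m : ℤ) + 1) ^ 2 *
        (7 * T (m + 1) ^ 2 + 114 * T m * T (m + 1) + 27 * T m ^ 2
          - 4 * ((m : ℤ) + 1) * (T (m + 1) - 3 * T m) ^ 2) := by
  induction m with
  | zero =>
    rw [Finset.sum_range_one, T_zero, T_one]
    norm_num
  | succ m ih =>
    rw [Finset.sum_range_succ]
    have hu := T_rec m
    have h2 : ((m : ℤ) + 2) ≠ 0 := by positivity
    apply mul_left_cancel₀ h2
    push_cast
    linear_combination ((m : ℤ) + 2) * ih +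
      ((4 * (m : ℤ) ^ 3 + 17 * (m : ℤ) ^ 2 + 20 * (m : ℤ) + 4) * T (m + 2)
        + (12 * (m : ℤ) ^ 3 + 39 * (m : ℤ) ^ 2 + 33 * (m : ℤ) + 6) * T m
        - (16 * (m : ℤ) ^ 3 + 100 * (m : ℤ) ^ 2 + 197 * (m : ℤ) + 122) * T (m + 1)) * hu

/-- T n is odd. -/
lemma T_odd (n : ℕ) : ∃ b : ℤ, T n = 2 * b + 1 := by
  refine ⟨∑ j ∈ Finset.range (n / 2), (n.choose (2 * j + 2) : ℤ) * ((2 * j + 1).choose j : ℤ), ?_⟩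
  rw [T, Finset.sum_range_succ', Finset.mul_sum]
  have hterm : ∀ j ∈ Finset.range (n / 2),
      (n.choose (2 * (j + 1)) : ℤ) * ((2 * (j + 1)).choose (j + 1) : ℤ)
      = 2 * ((n.choose (2 * j + 2) : ℤ) * ((2 * j + 1).choose j : ℤ)) := by
    intro j _
    have hcb : (2 * (j + 1)).choose (j + 1) = 2 * ((2 * j + 1).choose j) := by
      have h1 : 2 * (j + 1) = (2 * j + 1) + 1 := by ring
      rw [h1, Nat.choose_succ_succ]
      have h2 : (2 * j + 1).choose (j + 1) = (2 * j + 1).choose j := by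
        have h := Nat.choose_symm (show j + 1 ≤ 2 * j + 1 by omega)
        have h3 : 2 * j + 1 - (j + 1) = j := by omega
        rw [h3] at h
        exact h.symm
      rw [h2]
      ring
    have h4 : 2 * (j + 1) = 2 * j + 2 := by ring
    rw [hcb, h4]
    push_cast
    ring
  rw [Finset.sum_congr rfl hterm]
  simp [Nat.choose_zero_right]

theorem stmt_4 (n : ℕ) (hn : 0 < n) :
    2 * (∑ k ∈ Finset.range n, ((k : ℤ) + 1) * (16 * (k : ℤ) + 21) * T k * T (k + 1)) ≡
      9 * (n : ℤ) * T (n - 1) * T n [ZMOD ((n : ℤ) ^ 2)] := by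
  obtain ⟨m, rfl⟩ : ∃ m, n = m + 1 := ⟨n - 1, by omega⟩
  simp only [Nat.add_sub_cancel]
  obtain ⟨a, ha⟩ := T_odd m
  obtain ⟨b, hb⟩ := T_odd (m + 1)
  have hmain := main_id m
  rw [Int.modEq_iff_dvd]
  refine ⟨-(7 * b ^ 2 + 114 * a * b + 27 * a ^ 2 + 84 * a + 64 * b + 37
      - 4 * ((m : ℤ) + 1) * (b - 3 * a - 1) ^ 2), ?_⟩
  have h4 : (4 : ℤ) ≠ 0 := by norm_num
  apply mul_left_cancel₀ h4
  rw [ha, hb] at hmain ⊢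
  push_cast
  linear_combination -hmain
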